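/- arXiv:1603.05738 — 5 statements merged into one kernel-verified Lean document; each statement's English description precedes it below -/
import Mathlib

section
/- (Theorem 1, global convergence of the IAL framework) Suppose the nonnegative tolerance sequence {η_k} is summable, i.e., Σ_{k=1}^∞ η_k < +∞. Then δ_k := d(λ*) − d(λ^k) → 0 as k → ∞, and ‖Ax^{k+1} − b‖ → 0 as k → ∞. -/
/-!
Convexity of `f` turns the `η`-approximate optimality condition into: `x⁺` minimises `L_β(·; λ)`
up to `η`, with the quadratic margin `β/2 ‖A y − A x⁺‖²`. Evaluated at the minimisers of
`L_β(·; λ)` and `L_β(·; λ⁺)` this gives the dual ascent `d(λ⁺) ≥ d(λ) + β/2 ‖A x⁺ − b‖² − η`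
and the gap bound `d(ν) − d(λ) ≤ η + ⟪ν − λ, A x⁺ − b⟫`, which combine into the Lyapunov
inequality `‖λ⁺ − λ*‖² + 2β δ⁺ ≤ ‖λ − λ*‖² + 4β η`. Summed along the iteration, with
`∑ η_k < ∞`, it makes `∑ δ_k` finite, and the dual ascent makes `∑ ‖A x^{k+1} − b‖²` finite.
-/

open RealInnerProductSpace Filter

theorem ConvexOn.add_le_of_hasFDerivAt {E : Type*} [NormedAddCommGroup E] [NormedSpace ℝ E]
    {s : Set E} {f : E → ℝ} {f' : StrongDual ℝ E} {x y : E} (hf : ConvexOn ℝ s f)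
    (hx : x ∈ s) (hy : y ∈ s) (h : HasFDerivAt f f' x) :
    f x + f' (y - x) ≤ f y := by
  let ℓ : ℝ →ᵃ[ℝ] E := AffineMap.lineMap x y
  have hderiv : HasDerivAt (f ∘ ℓ) (f' (y - x)) 0 :=
    HasFDerivAt.comp_hasDerivAt (0 : ℝ) (by simpa [ℓ] using h) AffineMap.hasDerivAt_lineMap
  have := (hf.comp_affineMap ℓ).le_slope_of_hasDerivAt
    (by simpa [ℓ] using hx) (by simpa [ℓ] using hy) one_pos hderiv
  simp only [slope_def_field, Function.comp_apply, AffineMap.lineMap_apply_one,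
    AffineMap.lineMap_apply_zero, sub_zero, div_one, ℓ] at this
  linarith

theorem ConvexOn.add_inner_le_of_hasGradientAt {E : Type*} [NormedAddCommGroup E]
    [InnerProductSpace ℝ E] [CompleteSpace E]
    {s : Set E} {f : E → ℝ} {p x y : E} (hf : ConvexOn ℝ s f)
    (hx : x ∈ s) (hy : y ∈ s) (h : HasGradientAt f p x) :
    f x + ⟪p, y - x⟫ ≤ f y :=
  hf.add_le_of_hasFDerivAt hx hy h

theorem summable_of_add_le_add {u v w : ℕ → ℝ} (hu : ∀ k, 0 ≤ u k) (hv : ∀ k, 0 ≤ v k)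
    (hw : Summable w) (h : ∀ k, u (k + 1) + v k ≤ u k + w k) : Summable v := by
  obtain ⟨C, hC⟩ := hw.tendsto_sum_tsum_nat.bddAbove_range
  refine summable_of_sum_range_le (c := u 0 + C) hv fun N => ?_
  have : ∑ i ∈ Finset.range N, v i ≤ ∑ i ∈ Finset.range N, (u i - u (i + 1) + w i) :=
    Finset.sum_le_sum fun i _ => by linarith [h i]
  rw [Finset.sum_add_distrib, Finset.sum_range_sub'] at this
  linarith [hu N, hC ⟨N, rfl⟩]

section AugmentedLagrangian

variable {E F : Type*} [NormedAddCommGroup E] [InnerProductSpace ℝ E]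
  [NormedAddCommGroup F] [InnerProductSpace ℝ F]
  (A : E →L[ℝ] F) (b : F) (f g : E → ℝ) (β : ℝ)

noncomputable def augLagrangian (x : E) (μ : F) : ℝ :=
  f x + ⟪μ, A x - b⟫ + β / 2 * ‖A x - b‖ ^ 2 + g x

theorem augLagrangian_eq_add_inner (x : E) (μ ν : F) :
    augLagrangian A b f g β x μ = augLagrangian A b f g β x ν + ⟪μ - ν, A x - b⟫ := by
  simp only [augLagrangian, inner_sub_left]
  ring

variable [CompleteSpace E] [CompleteSpace F]

/-- `p` stands for `∇f x`. -/
def IsApproxALSolution (p : E) (μ : F) (η : ℝ) (x : E) : Prop :=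
  ∀ y, ⟪p + A.adjoint (μ + β • (A x - b)), x - y⟫ + g x - g y ≤ η

namespace IsApproxALSolution

variable {A b f g β} {p : E} {μ : F} {η : ℝ} {x : E}
  (h : IsApproxALSolution A b g β p μ η x) (hf : ConvexOn ℝ Set.univ f) (hp : HasGradientAt f p x)
include h hf hp

theorem augLagrangian_add_sq_le (y : E) :
    augLagrangian A b f g β x μ + β / 2 * ‖A y - A x‖ ^ 2 ≤ augLagrangian A b f g β y μ + η := by
  have hfy := hf.add_inner_le_of_hasGradientAt (Set.mem_univ x) (Set.mem_univ y) hp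
  have hy := h y
  rw [augLagrangian, augLagrangian]
  set r := A x - b
  set s := A y - b
  have hAxy : A x - A y = r - s := (sub_sub_sub_cancel_right _ _ _).symm
  have hAyx : A y - A x = s - r := (sub_sub_sub_cancel_right _ _ _).symm
  rw [inner_add_left, ContinuousLinearMap.adjoint_inner_left, map_sub, hAxy] at hy
  -- the margin comes from `2 ⟪r, r - s⟫ = ‖r‖ ^ 2 - ‖s‖ ^ 2 + ‖s - r‖ ^ 2`
  rw [hAyx, norm_sub_sq_real s r, ← real_inner_self_eq_norm_sq r,
    ← real_inner_self_eq_norm_sq s]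
  simp only [inner_add_left, inner_sub_right, real_inner_smul_left, real_inner_comm r s]
    at hfy hy ⊢
  linarith

theorem augLagrangian_le_add (hβ : 0 ≤ β) (y : E) :
    augLagrangian A b f g β x μ ≤ augLagrangian A b f g β y μ + η := by
  have := h.augLagrangian_add_sq_le hf hp y
  have : 0 ≤ β / 2 * ‖A y - A x‖ ^ 2 := by positivity
  linarith

variable {d : F → ℝ} (hd : ∀ ν, IsLeast (Set.range fun y => augLagrangian A b f g β y ν) (d ν))
  (hβ : 0 ≤ β)
include hd hβ

theorem dual_ascent : d μ + β / 2 * ‖A x - b‖ ^ 2 - η ≤ d (μ + β • (A x - b)) := by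
  obtain ⟨y, hy⟩ := (hd (μ + β • (A x - b))).1
  have hshift := augLagrangian_eq_add_inner A b f g β y (μ + β • (A x - b)) μ
  have hquad := h.augLagrangian_add_sq_le hf hp y
  have hdual := (hd μ).2 ⟨x, rfl⟩
  rw [add_sub_cancel_left, real_inner_smul_left] at hshift
  rw [← hy]
  simp only at hdual ⊢
  rw [hshift]
  set r := A x - b
  set s := A y - b
  have hAyx : A y - A x = s - r := (sub_sub_sub_cancel_right _ _ _).symm
  rw [hAyx, norm_sub_sq_real, real_inner_comm] at hquad
  have : 0 ≤ β / 2 * ‖s‖ ^ 2 := by positivity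
  linarith

theorem dual_gap_le (ν : F) : d ν - d μ ≤ η + ⟪ν - μ, A x - b⟫ := by
  obtain ⟨y, hy⟩ := (hd μ).1
  have hdual := (hd ν).2 ⟨x, rfl⟩
  have hshift := augLagrangian_eq_add_inner A b f g β x ν μ
  have hle := h.augLagrangian_le_add hf hp hβ y
  simp only at hy hdual
  linarith

theorem norm_sub_sq_add_dual_gap_le (ν : F) :
    ‖μ + β • (A x - b) - ν‖ ^ 2 + 2 * β * (d ν - d (μ + β • (A x - b)))
      ≤ ‖μ - ν‖ ^ 2 + 4 * β * η := by
  have hascent := h.dual_ascent hf hp hd hβ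
  have hgap := h.dual_gap_le hf hp hd hβ ν
  have hexpand : ‖μ + β • (A x - b) - ν‖ ^ 2
      = ‖μ - ν‖ ^ 2 - 2 * β * ⟪ν - μ, A x - b⟫ + β ^ 2 * ‖A x - b‖ ^ 2 := by
    rw [add_sub_right_comm, norm_add_sq_real, real_inner_smul_right, norm_smul, mul_pow,
      Real.norm_eq_abs, sq_abs, ← neg_sub ν μ, inner_neg_left]
    ring
  rw [hexpand]
  linear_combination (2 * β) * hascent + (2 * β) * hgap

end IsApproxALSolution

end AugmentedLagrangian

theorem ial_global_convergence_general
    {n m : ℕ}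
    (A : EuclideanSpace ℝ (Fin n) →L[ℝ] EuclideanSpace ℝ (Fin m))
    (b : EuclideanSpace ℝ (Fin m))
    (f g : EuclideanSpace ℝ (Fin n) → ℝ)
    (f' : EuclideanSpace ℝ (Fin n) → EuclideanSpace ℝ (Fin n))
    (hf : ConvexOn ℝ Set.univ f)
    (hf' : ∀ x, HasGradientAt f (f' x) x)
    (β : ℝ) (hβ : 0 < β)
    (L : EuclideanSpace ℝ (Fin n) → EuclideanSpace ℝ (Fin m) → ℝ)
    (hL : ∀ x lam, L x lam
        = f x + ⟪lam, A x - b⟫ + β / 2 * ‖A x - b‖ ^ 2 + g x)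
    (d : EuclideanSpace ℝ (Fin m) → ℝ)
    (hd : ∀ lam, IsLeast (Set.range fun x => L x lam) (d lam))
    (x : ℕ → EuclideanSpace ℝ (Fin n))
    (lam : ℕ → EuclideanSpace ℝ (Fin m))
    (η : ℕ → ℝ)
    (happrox : ∀ k, 1 ≤ k → ∀ y,
        ⟪f' (x (k + 1)) + A.adjoint (lam k + β • (A (x (k + 1)) - b)), x (k + 1) - y⟫
          + g (x (k + 1)) - g y ≤ η k)
    (hlam : ∀ k, 1 ≤ k → lam (k + 1) = lam k + β • (A (x (k + 1)) - b))
    (lamstar : EuclideanSpace ℝ (Fin m))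
    (hstar : ∀ μ, d μ ≤ d lamstar)
    (hsum : Summable fun k : ℕ => η (k + 1)) :
    Tendsto (fun k => d lamstar - d (lam k)) atTop (nhds 0)
      ∧ Tendsto (fun k => ‖A (x (k + 1)) - b‖) atTop (nhds 0) := by
  obtain rfl : L = augLagrangian A b f g β := funext₂ hL
  have hstep (k : ℕ) : IsApproxALSolution A b g β (f' (x (k + 2))) (lam (k + 1)) (η (k + 1))
      (x (k + 2)) := happrox (k + 1) le_add_self
  have hlam' (k : ℕ) := hlam (k + 1) le_add_self
  have hgap_nonneg (k : ℕ) : 0 ≤ d lamstar - d (lam k) := sub_nonneg.2 (hstar _)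
  have hgap_summable : Summable fun k => 2 * β * (d lamstar - d (lam (k + 2))) := by
    refine summable_of_add_le_add (u := fun k => ‖lam (k + 1) - lamstar‖ ^ 2)
      (fun _ => sq_nonneg _) (fun k => mul_nonneg (by positivity) (hgap_nonneg (k + 2)))
      (hsum.mul_left (4 * β)) fun k => ?_
    simpa only [hlam'] using (hstep k).norm_sub_sq_add_dual_gap_le hf (hf' _) hd hβ.le lamstar
  have hres_summable : Summable fun k => β / 2 * ‖A (x (k + 2)) - b‖ ^ 2 := by
    refine summable_of_add_le_add (u := fun k => d lamstar - d (lam (k + 1)))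
      (fun _ => hgap_nonneg _) (fun _ => by positivity) hsum fun k => ?_
    have := (hstep k).dual_ascent hf (hf' _) hd hβ.le
    rw [← hlam'] at this
    linarith
  refine ⟨(tendsto_add_atTop_iff_nat 2).1 ?_, (tendsto_add_atTop_iff_nat 1).1 ?_⟩
  · exact ((summable_mul_left_iff (by positivity)).1 hgap_summable).tendsto_atTop_zero
  · simpa using ((summable_mul_left_iff (by positivity)).1 hres_summable).tendsto_atTop_zero.sqrt

/-- **Theorem 1 (global convergence of the IAL framework).**
Suppose the nonnegative tolerance sequence `{η_k}` is summable. Then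
`δ_k := d(λ*) − d(λ^k) → 0` and `‖A x^{k+1} − b‖ → 0` as `k → ∞`. -/
theorem ial_global_convergence
    {n m : ℕ}
    (A : EuclideanSpace ℝ (Fin n) →L[ℝ] EuclideanSpace ℝ (Fin m))
    (b : EuclideanSpace ℝ (Fin m))
    (f g : EuclideanSpace ℝ (Fin n) → ℝ)
    (f' : EuclideanSpace ℝ (Fin n) → EuclideanSpace ℝ (Fin n))
    (hf : ConvexOn ℝ Set.univ f)
    (hf' : ∀ x, HasGradientAt f (f' x) x)
    (hg : ConvexOn ℝ Set.univ g)
    (β : ℝ) (hβ : 0 < β)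
    (L : EuclideanSpace ℝ (Fin n) → EuclideanSpace ℝ (Fin m) → ℝ)
    (hL : ∀ x lam, L x lam
        = f x + ⟪lam, A x - b⟫ + β / 2 * ‖A x - b‖ ^ 2 + g x)
    (d : EuclideanSpace ℝ (Fin m) → ℝ)
    (hd : ∀ lam, IsLeast (Set.range fun x => L x lam) (d lam))
    (x : ℕ → EuclideanSpace ℝ (Fin n))
    (lam : ℕ → EuclideanSpace ℝ (Fin m))
    (η : ℕ → ℝ)
    (hη : ∀ k, 1 ≤ k → 0 ≤ η k)
    (happrox : ∀ k, 1 ≤ k → ∀ y,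
        ⟪f' (x (k + 1)) + A.adjoint (lam k + β • (A (x (k + 1)) - b)), x (k + 1) - y⟫
          + g (x (k + 1)) - g y ≤ η k)
    (hlam : ∀ k, 1 ≤ k → lam (k + 1) = lam k + β • (A (x (k + 1)) - b))
    (lamstar : EuclideanSpace ℝ (Fin m))
    (hstar : ∀ μ, d μ ≤ d lamstar)
    (hsum : Summable fun k : ℕ => η (k + 1)) :
    Tendsto (fun k => d lamstar - d (lam k)) atTop (nhds 0)
      ∧ Tendsto (fun k => ‖A (x (k + 1)) - b‖) atTop (nhds 0) :=
  ial_global_convergence_general A b f g f' hf hf' β hβ L hL d hd x lam η happrox hlam lamstar hstar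
    hsum
end

section
/- (Theorem 3, primal objective rate) Let σ > 0 and α ∈ (1/2, 1], and suppose the tolerance sequence is η_k = σ/k^{2α} for all k ≥ 1. Let x* be an optimal solution of the primal problem (Ax* = b and F(x*) ≤ F(x) for all x with Ax = b), and assume strong duality holds: d(λ*) = F(x*). Then for all k ≥ 1: −‖λ*‖·√(ψ_k) − (β/2)·ψ_k ≤ F(x^{k+1}) − F(x*) ≤ (‖λ*‖ + B)·√(ψ_k) + η_k, where ψ_k := (2/β)·(C + √σ)/k^α and C := 4√(3((3/2)θσ + 1)σ/θ) + (4/3)·max{δ₁, 4/θ}. -/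
open RealInnerProductSpace Filter

lemma aux_grad_ineq {E : Type*} [NormedAddCommGroup E] [InnerProductSpace ℝ E] [CompleteSpace E]
    {f : E → ℝ} (hf : ConvexOn ℝ Set.univ f) {x gx : E}
    (hfx : HasGradientAt f gx x) (y : E) : f x + ⟪gx, y - x⟫ ≤ f y := by
  rcases eq_or_ne y x with rfl | hne
  · simp
  · set c : ℝ → E := fun t => x + t • (y - x) with hc
    have hcurve : ∀ t : ℝ, HasDerivAt c (y - x) t := by
      intro t
      have h1 : HasDerivAt (fun t : ℝ => t • (y - x)) ((1 : ℝ) • (y - x)) t :=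
        (hasDerivAt_id t).smul_const (y - x)
      simpa [hc, one_smul] using h1.const_add x
    have hφconv : ConvexOn ℝ Set.univ (f ∘ c) := by
      have h2 : ConvexOn ℝ ((AffineMap.lineMap x y : ℝ →ᵃ[ℝ] E) ⁻¹' Set.univ)
          (f ∘ (AffineMap.lineMap x y : ℝ →ᵃ[ℝ] E)) := hf.comp_affineMap _
      have hcl : (f ∘ c) = f ∘ (AffineMap.lineMap x y : ℝ →ᵃ[ℝ] E) := by
        funext t
        simp only [Function.comp_apply, hc, AffineMap.lineMap_apply_module]
        congr 1
        module
      rw [hcl]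
      simpa using h2
    have hφd : HasDerivAt (f ∘ c) ⟪gx, y - x⟫ 0 := by
      have h0 : c 0 = x := by simp [hc]
      have hfd : HasFDerivAt f (InnerProductSpace.toDual ℝ E gx : E →L[ℝ] ℝ) (c 0) := by
        rw [h0]; exact hfx.hasFDerivAt
      have := hfd.comp_hasDerivAt 0 (hcurve 0)
      simpa [InnerProductSpace.toDual_apply_apply] using this
    have hs := hφconv.le_slope_of_hasDerivAt (Set.mem_univ (0:ℝ)) (Set.mem_univ (1:ℝ))
      one_pos hφd
    rw [slope_def_field] at hs
    simp only [Function.comp_apply, hc, one_smul, zero_smul, add_zero] at hs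
    have : x + (y - x) = y := by abel
    rw [this] at hs
    simp only [div_one, sub_zero] at hs
    linarith

set_option maxHeartbeats 1000000 in
lemma rate_step {θ σ T P Q dk dk1 : ℝ} (hθ : 0 < θ) (hσ : 0 < σ)
    (hθσ : θ * σ ≤ 1/8) (hθT : 16/3 ≤ θ * T)
    (hP : 1 ≤ P) (hPQ : P ≤ Q) (hQP : Q ≤ P + 1)
    (hd0 : 0 ≤ dk) (hd1 : 0 ≤ dk1)
    (h1 : dk1 ≤ dk + σ/P^2)
    (h2 : σ/P^2 ≤ dk → dk1 ≤ dk + σ/P^2 - 2*θ*(dk - σ/P^2)^2)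
    (hind : dk ≤ T/P - σ/P^2) :
    dk1 ≤ T/Q - σ/Q^2 := by
  have hP0 : (0:ℝ) < P := by linarith
  have hQ0 : (0:ℝ) < Q := by linarith
  have hP2 : (0:ℝ) < P^2 := by positivity
  have hQ2 : (0:ℝ) < Q^2 := by positivity
  have h1P2 : (1:ℝ) ≤ P^2 := by nlinarith
  have hPQ2 : P^2 ≤ Q^2 := by nlinarith
  have h1Q2 : (1:ℝ) ≤ Q^2 := by nlinarith
  have hT0 : 0 < T := by nlinarith
  have hσT : σ ≤ 3/128 * T := by nlinarith
  have h8σT : 8*σ ≤ T := by linarith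
  set η := σ / P^2 with hη
  have hη0 : 0 < η := by positivity
  clear_value η
  have hησ : η ≤ σ := by
    rw [hη, div_le_iff₀ hP2]
    nlinarith [mul_le_mul_of_nonneg_left h1P2 hσ.le]
  have hQη : σ / Q^2 ≤ η := by
    rw [hη, div_le_div_iff₀ hQ2 hP2]
    nlinarith [mul_le_mul_of_nonneg_left hPQ2 hσ.le]
  have hQσ : σ / Q^2 ≤ σ := by
    rw [div_le_iff₀ hQ2]
    nlinarith [mul_le_mul_of_nonneg_left h1Q2 hσ.le]
  rcases le_or_gt dk (2*η) with hcase | hcase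
  · -- small case
    have hgoal : (4*σ)/P^2 ≤ T/Q := by
      rw [div_le_div_iff₀ hP2 hQ0]
      have hQ2P2 : Q ≤ 2 * P^2 := by nlinarith
      have p1 : σ*Q ≤ σ*(2*P^2) := mul_le_mul_of_nonneg_left hQ2P2 hσ.le
      have p2 : (8*σ)*P^2 ≤ T*P^2 := mul_le_mul_of_nonneg_right h8σT hP2.le
      linarith [p1, p2]
    have h4η : 4 * η = (4*σ)/P^2 := by rw [hη]; ring
    linarith
  · -- main case
    have hηd : η ≤ dk := by linarith
    have hrec := h2 hηd
    have hsq : (θ/2) * dk^2 ≤ 2*θ*(dk - η)^2 := by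
      have e1 : dk/2 ≤ dk - η := by linarith
      have e2 : (dk/2)^2 ≤ (dk-η)^2 := by
        apply pow_le_pow_left₀ (by linarith) e1
      nlinarith [mul_le_mul_of_nonneg_left e2 (by linarith : (0:ℝ) ≤ 2*θ)]
    have hg : dk1 ≤ dk + η - (θ/2) * dk^2 := by linarith
    set M := T/P - η with hM
    clear_value M
    have hMd : dk ≤ M := hind
    have hM0 : 0 ≤ M := le_trans hd0 hMd
    set V := T/P^2 with hV
    have hV0 : 0 < V := by positivity
    clear_value V
    have hσV : η ≤ (3/128) * V := by
      have e4 : σ/P^2 ≤ (3/128*T)/P^2 := (div_le_div_iff_of_pos_right hP2).mpr hσT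
      have e4b : (3/128*T)/P^2 = 3/128*V := by rw [hV]; ring
      rw [hη]
      linarith [e4, e4b.le]
    rcases le_or_gt M (1/θ) with hsub | hsub
    · -- monotone branch
      have hθM : θ * M ≤ 1 := by
        rw [le_div_iff₀ hθ] at hsub; linarith
      have hθdk : θ * dk ≤ 1 := le_trans (mul_le_mul_of_nonneg_left hMd hθ.le) hθM
      have hgm : dk + η - (θ/2)*dk^2 ≤ M + η - (θ/2)*M^2 := by
        have e3 : 0 ≤ (M - dk) * (1 - θ*(M+dk)/2) :=
          mul_nonneg (by linarith) (by nlinarith [hθM, hθdk])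
        nlinarith [e3]
      have hMlow : (125/128) * (T/P) ≤ M := by
        have e5 : η ≤ (3/128) * (T/P) := by
          have : V ≤ T/P := by
            rw [hV, div_le_div_iff₀ hP2 hP0]
            nlinarith [mul_le_mul_of_nonneg_left hP (mul_nonneg hT0.le hP0.le)]
          linarith [hσV, mul_le_mul_of_nonneg_left this (by norm_num : (0:ℝ) ≤ 3/128)]
        rw [hM]; linarith
      have hkey : V + 2*η ≤ (θ/2) * M^2 := by
        have hU0 : (0:ℝ) ≤ (125/128) * (T/P) := by positivity
        have e6 : ((125/128) * (T/P))^2 ≤ M^2 := pow_le_pow_left₀ hU0 hMlow 2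
        have e7 : (θ/2) * ((125/128) * (T/P))^2 = (125/128)^2/2 * ((θ*T)*V) := by
          rw [hV]; field_simp
        have e8 : (16/3)*V ≤ (θ*T)*V := mul_le_mul_of_nonneg_right hθT hV0.le
        have e9 : (θ/2) * ((125/128) * (T/P))^2 ≤ (θ/2) * M^2 :=
          mul_le_mul_of_nonneg_left e6 (by linarith)
        rw [e7] at e9
        linarith [e9, e8, hσV]
      have hTPQ : T/P - T/Q ≤ V := by
        rw [div_sub_div T T hP0.ne' hQ0.ne', hV, div_le_div_iff₀ (by positivity) hP2]
        have s1 : T*Q ≤ T*(P+1) := mul_le_mul_of_nonneg_left hQP hT0.le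
        have s2 : (T*Q)*P^2 ≤ (T*(P+1))*P^2 := mul_le_mul_of_nonneg_right s1 hP2.le
        have s3 : T*(P*P) ≤ T*(P*Q) :=
          mul_le_mul_of_nonneg_left (mul_le_mul_of_nonneg_left hPQ hP0.le) hT0.le
        nlinarith [s2, s3]
      -- assemble: dk1 ≤ M + η - (θ/2)M² = T/P - (θ/2)M² ≤ T/P - V - 2η ≤ T/Q - 2η
      have hMη : M + η = T/P := by rw [hM]; ring
      linarith [hg, hgm, hkey, hTPQ, hQη]
    · -- max branch
      set τ := 1/θ with hτ
      have hτ0 : 0 < τ := by positivity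
      clear_value τ
      have hτθ : θ * τ = 1 := by rw [hτ]; field_simp
      have hgmax : dk + η - (θ/2)*dk^2 ≤ τ/2 + η := by
        have e10 : (0:ℝ) ≤ θ*(dk - τ)^2 := by positivity
        have e11 : θ*(dk - τ)^2 = θ*dk^2 - 2*dk + τ := by
          rw [hτ]; field_simp; ring
        rw [e11] at e10
        linarith
      have hPθT : P < θ * T := by
        have hMU : M ≤ T/P := by rw [hM]; linarith
        have h17 : τ < T/P := lt_of_lt_of_le hsub hMU
        rw [hτ, div_lt_div_iff₀ hθ hP0] at h17
        linarith
      have hQb : Q ≤ (19/16) * (θ*T) := by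
        have h16 : 1 ≤ (3/16) * (θ*T) := by linarith
        linarith
      have hστ8 : σ ≤ τ/8 := by
        have e12 := mul_le_mul_of_nonneg_right hθσ hτ0.le
        have e13 : θ*σ*τ = σ := by rw [hτ]; field_simp
        linarith [e12, e13.symm.le, e13.le]
      have hfin : τ/2 + 2*σ ≤ T/Q := by
        have hden : (0:ℝ) < (19/16) * (θ*T) := by nlinarith
        have e14 : T/((19/16) * (θ*T)) ≤ T/Q := by
          apply div_le_div_of_nonneg_left hT0.le hQ0 hQb
        have e15 : T/((19/16) * (θ*T)) = (16/19)*τ := by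
          rw [hτ]; field_simp
        rw [e15] at e14
        linarith
      linarith [hg, hgmax, hfin, hQσ, hησ]

lemma aux_rpow_add_one {x α : ℝ} (hx : 0 ≤ x) (h0 : 0 < α) (h1 : α ≤ 1) :
    (x + 1) ^ α ≤ x ^ α + 1 := by
  lift x to NNReal using hx
  have hp1 : 1 ≤ 1 / α := by
    rw [le_div_iff₀ h0]; linarith
  have key := NNReal.rpow_add_rpow_le_add (x ^ α) (1 : NNReal) hp1
  have h2 : (x ^ α) ^ (1/α : ℝ) = x := by
    rw [← NNReal.rpow_mul, mul_one_div, div_self h0.ne', NNReal.rpow_one]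
  have h3 : (1 : NNReal) ^ (1/α : ℝ) = 1 := NNReal.one_rpow _
  rw [h2, h3] at key
  have h4 : (1:ℝ) / (1/α) = α := by field_simp
  rw [h4] at key
  have h5 := NNReal.coe_le_coe.mpr key
  push_cast at h5
  convert h5 using 2


lemma rate_rec {θ σ T α : ℝ} {δ η : ℕ → ℝ} (hθ : 0 < θ) (hσ : 0 < σ)
    (hθσ : θ * σ ≤ 1/8) (hθT : 16/3 ≤ θ * T)
    (hα1 : 1/2 < α) (hα2 : α ≤ 1)
    (hη : ∀ k, 1 ≤ k → η k = σ / (k:ℝ) ^ (2*α))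
    (hδ0 : ∀ k, 1 ≤ k → 0 ≤ δ k)
    (hδ1 : δ 1 ≤ 3/4 * T)
    (hrec1 : ∀ k, 1 ≤ k → δ (k+1) ≤ δ k + η k)
    (hrec2 : ∀ k, 1 ≤ k → η k ≤ δ k → δ (k+1) ≤ δ k + η k - 2*θ*(δ k - η k)^2) :
    ∀ k, 1 ≤ k → δ k + η k ≤ T / (k:ℝ)^α := by
  have hα0 : 0 < α := by linarith
  have hT0 : 0 < T := by nlinarith
  have hσT8 : 8 * σ ≤ T := by nlinarith
  -- rpow facts
  have hPfact : ∀ k : ℕ, 1 ≤ k → (1:ℝ) ≤ (k:ℝ)^α := by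
    intro k hk
    apply Real.one_le_rpow (by exact_mod_cast hk) hα0.le
  have h2α : ∀ k : ℕ, 1 ≤ k → (k:ℝ)^(2*α) = ((k:ℝ)^α)^2 := by
    intro k hk
    rw [mul_comm, Real.rpow_mul (by positivity), Real.rpow_two]
  have hηform : ∀ k : ℕ, 1 ≤ k → η k = σ / ((k:ℝ)^α)^2 := by
    intro k hk; rw [hη k hk, h2α k hk]
  -- induction
  intro k hk
  induction k with
  | zero => omega
  | succ n ih =>
    rcases Nat.eq_or_lt_of_le hk with h1 | h1
    · -- n + 1 = 1
      have hn : n = 0 := by omega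
      subst hn
      rw [hηform 1 le_rfl]
      norm_num [Real.one_rpow]
      linarith
    · -- n ≥ 1
      have hn1 : 1 ≤ n := by omega
      have ihn := ih hn1
      have hP := hPfact n hn1
      have hQmono : ((n:ℝ))^α ≤ ((n+1:ℕ):ℝ)^α := by
        apply Real.rpow_le_rpow (by positivity) (by push_cast; linarith) hα0.le
      have hQadd : ((n+1:ℕ):ℝ)^α ≤ ((n:ℝ))^α + 1 := by
        push_cast
        exact aux_rpow_add_one (by positivity) hα0 hα2
      have h1' : δ (n+1) ≤ δ n + σ/((n:ℝ)^α)^2 := by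
        have := hrec1 n hn1; rw [hηform n hn1] at this; exact this
      have h2' : σ/((n:ℝ)^α)^2 ≤ δ n → δ (n+1) ≤ δ n + σ/((n:ℝ)^α)^2 - 2*θ*(δ n - σ/((n:ℝ)^α)^2)^2 := by
        intro hle
        have := hrec2 n hn1 (by rw [hηform n hn1]; exact hle)
        rw [hηform n hn1] at this; exact this
      have hind' : δ n ≤ T/((n:ℝ)^α) - σ/((n:ℝ)^α)^2 := by
        have := ihn; rw [hηform n hn1] at this; linarith
      have := rate_step hθ hσ hθσ hθT hP hQmono hQadd (hδ0 n hn1) (hδ0 (n+1) (by omega))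
        h1' h2' hind'
      rw [hηform (n+1) (by omega)]
      linarith

set_option maxHeartbeats 1600000 in
/-- **Theorem 3 (primal objective rate).** -/
theorem ial_primal_objective_rate
    {n m : ℕ}
    (A : EuclideanSpace ℝ (Fin n) →L[ℝ] EuclideanSpace ℝ (Fin m))
    (b : EuclideanSpace ℝ (Fin m))
    (f g : EuclideanSpace ℝ (Fin n) → ℝ)
    (f' : EuclideanSpace ℝ (Fin n) → EuclideanSpace ℝ (Fin n))
    (hf : ConvexOn ℝ Set.univ f)
    (hf' : ∀ x, HasGradientAt f (f' x) x)
    (hg : ConvexOn ℝ Set.univ g)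
    (β : ℝ) (hβ : 0 < β)
    (L : EuclideanSpace ℝ (Fin n) → EuclideanSpace ℝ (Fin m) → ℝ)
    (hL : ∀ x lam, L x lam
        = f x + ⟪lam, A x - b⟫ + β / 2 * ‖A x - b‖ ^ 2 + g x)
    (d : EuclideanSpace ℝ (Fin m) → ℝ)
    (hd : ∀ lam, IsLeast (Set.range fun x => L x lam) (d lam))
    (x : ℕ → EuclideanSpace ℝ (Fin n))
    (lam : ℕ → EuclideanSpace ℝ (Fin m))
    (σ α : ℝ) (hσ : 0 < σ) (hα : 1 / 2 < α ∧ α ≤ 1)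
    (η : ℕ → ℝ)
    (hη : ∀ k, 1 ≤ k → η k = σ / (k : ℝ) ^ (2 * α))
    (happrox : ∀ k, 1 ≤ k → ∀ y,
        ⟪f' (x (k + 1)) + A.adjoint (lam k + β • (A (x (k + 1)) - b)), x (k + 1) - y⟫
          + g (x (k + 1)) - g y ≤ η k)
    (hlam : ∀ k, 1 ≤ k → lam (k + 1) = lam k + β • (A (x (k + 1)) - b))
    (lamstar : EuclideanSpace ℝ (Fin m))
    (hstar : ∀ μ, d μ ≤ d lamstar)
    (δ : ℕ → ℝ)
    (hδ : ∀ k, δ k = d lamstar - d (lam k))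
    (B : ℝ)
    (hB : B = Real.sqrt (‖lam 1 - lamstar‖ ^ 2 + 2 * β * ∑' k : ℕ, η (k + 1)))
    (θ : ℝ)
    (hθ : θ = β / (4 * B ^ 2))
    (C : ℝ)
    (hC : C = 4 * Real.sqrt (3 * (3 / 2 * θ * σ + 1) * σ / θ)
        + 4 / 3 * max (δ 1) (4 / θ))
    (F : EuclideanSpace ℝ (Fin n) → ℝ)
    (hF : ∀ y, F y = f y + g y)
    (xstar : EuclideanSpace ℝ (Fin n))
    (hfeas : A xstar = b)
    (hopt : ∀ y, A y = b → F xstar ≤ F y)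
    (hsd : d lamstar = F xstar)
    (ψ : ℕ → ℝ)
    (hψ : ∀ k, ψ k = 2 / β * ((C + Real.sqrt σ) / (k : ℝ) ^ α)) :
    ∀ k, 1 ≤ k →
      -‖lamstar‖ * Real.sqrt (ψ k) - β / 2 * ψ k ≤ F (x (k + 1)) - F xstar
        ∧ F (x (k + 1)) - F xstar ≤ (‖lamstar‖ + B) * Real.sqrt (ψ k) + η k := by
  
  have hgrad : ∀ x y, f x + ⟪f' x, y - x⟫ ≤ f y := fun x y => aux_grad_ineq hf (hf' x) y
  have hLform : ∀ y μ, L y μ = (f y + g y + ⟪μ, A y - b⟫) + β/2*‖A y - b‖^2 := by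
    intro y μ; rw [hL]; ring
  have hdle : ∀ μ y, d μ ≤ L y μ := fun μ y => (hd μ).2 ⟨y, rfl⟩
  have hdmem : ∀ μ, ∃ y, L y μ = d μ := fun μ => (hd μ).1
  -- step 1: Phi inequality
  have hΦmin : ∀ k, 1 ≤ k → ∀ y,
      f (x (k+1)) + g (x (k+1)) + ⟪lam (k+1), A (x (k+1)) - b⟫
        ≤ f y + g y + ⟪lam (k+1), A y - b⟫ + η k := by
    intro k hk y
    have ha := happrox k hk y
    rw [← hlam k hk] at ha
    rw [inner_add_left] at ha
    rw [ContinuousLinearMap.adjoint_inner_left] at ha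
    have hmap : A (x (k+1) - y) = (A (x (k+1)) - b) - (A y - b) := by
      rw [map_sub]; abel
    rw [hmap, inner_sub_right, inner_sub_right] at ha
    have hgr := hgrad (x (k+1)) y
    rw [inner_sub_right] at hgr
    linarith
  -- quadratic bound : Φ y ≤ L y (lam k) + (β/2)‖r‖²  and equality at x (k+1)
  have hΦL : ∀ k, 1 ≤ k → ∀ y,
      f y + g y + ⟪lam (k+1), A y - b⟫ ≤ L y (lam k) + β/2*‖A (x (k+1)) - b‖^2 := by
    intro k hk y
    rw [hlam k hk, inner_add_left, real_inner_smul_left, hLform]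
    have hsq : 2 * ⟪A (x (k+1)) - b, A y - b⟫ ≤ ‖A (x (k+1)) - b‖^2 + ‖A y - b‖^2 := by
      nlinarith [sq_nonneg (‖A (x (k+1)) - b - (A y - b)‖),
        norm_sub_sq_real (A (x (k+1)) - b) (A y - b)]
    nlinarith [hsq, hβ]
  have hΦLx : ∀ k, 1 ≤ k →
      f (x (k+1)) + g (x (k+1)) + ⟪lam (k+1), A (x (k+1)) - b⟫
        = L (x (k+1)) (lam k) + β/2*‖A (x (k+1)) - b‖^2 := by
    intro k hk
    rw [hlam k hk, inner_add_left, real_inner_smul_left, hLform,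
      real_inner_self_eq_norm_sq]
    ring
  -- d(lam k+1) lower bound via Phi
  have hΦd : ∀ k, 1 ≤ k →
      f (x (k+1)) + g (x (k+1)) + ⟪lam (k+1), A (x (k+1)) - b⟫ - η k ≤ d (lam (k+1)) := by
    intro k hk
    obtain ⟨ym, hym⟩ := hdmem (lam (k+1))
    have h1 := hΦmin k hk ym
    have h2 : f ym + g ym + ⟪lam (k+1), A ym - b⟫ ≤ L ym (lam (k+1)) := by
      rw [hLform]
      nlinarith [sq_nonneg ‖A ym - b‖, hβ]
    rw [hym] at h2
    linarith
  -- L(x+, lam k) ≤ d(lam k) + η k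
  have hLd : ∀ k, 1 ≤ k → L (x (k+1)) (lam k) ≤ d (lam k) + η k := by
    intro k hk
    obtain ⟨ym, hym⟩ := hdmem (lam k)
    have h1 := hΦmin k hk ym
    have h2 := hΦL k hk ym
    have h3 := hΦLx k hk
    rw [hym] at h2
    linarith
  -- D1 : d (lam k) + (β/2)‖r‖² - η ≤ d (lam (k+1))
  have hD1 : ∀ k, 1 ≤ k →
      d (lam k) + β/2*‖A (x (k+1)) - b‖^2 - η k ≤ d (lam (k+1)) := by
    intro k hk
    have h1 := hΦd k hk
    have h2 := hΦLx k hk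
    have h3 := hdle (lam k) (x (k+1))
    linarith
  -- D2 : d lamstar ≤ d (lam k) + η k + ⟪lamstar - lam k, r⟫
  have hD2 : ∀ k, 1 ≤ k →
      d lamstar ≤ d (lam k) + η k + ⟪lamstar - lam k, A (x (k+1)) - b⟫ := by
    intro k hk
    have h1 : L (x (k+1)) lamstar
        = L (x (k+1)) (lam k) + ⟪lamstar - lam k, A (x (k+1)) - b⟫ := by
      rw [hLform, hLform, inner_sub_left]; ring
    have h2 := hdle lamstar (x (k+1))
    have h3 := hLd k hk
    linarith
  -- D3 : ⟪lam (k+1) - lamstar, r⟫ ≤ η k - (d lamstar - d (lam (k+1))) + (β/2)‖r‖²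
  have hD3 : ∀ k, 1 ≤ k →
      ⟪lam (k+1) - lamstar, A (x (k+1)) - b⟫
        ≤ η k - (d lamstar - d (lam (k+1))) + β/2*‖A (x (k+1)) - b‖^2 := by
    intro k hk
    have h1 : L (x (k+1)) lamstar
        = (f (x (k+1)) + g (x (k+1)) + ⟪lam (k+1), A (x (k+1)) - b⟫)
          - ⟪lam (k+1) - lamstar, A (x (k+1)) - b⟫ + β/2*‖A (x (k+1)) - b‖^2 := by
      rw [hLform, inner_sub_left]; ring
    have h2 := hdle lamstar (x (k+1))
    have h3 := hΦd k hk
    linarith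
  -- D4 : Lyapunov
  have hD4 : ∀ k, 1 ≤ k →
      ‖lam (k+1) - lamstar‖^2
        ≤ ‖lam k - lamstar‖^2 + 2*β*(η k) - 2*β*(d lamstar - d (lam (k+1))) := by
    intro k hk
    have hsplit : lam (k+1) - lamstar = (lam k - lamstar) + β • (A (x (k+1)) - b) := by
      rw [hlam k hk]; abel
    have hexp : ‖lam (k+1) - lamstar‖^2
        = ‖lam k - lamstar‖^2 + 2*(β*⟪lam k - lamstar, A (x (k+1)) - b⟫)
          + β^2*‖A (x (k+1)) - b‖^2 := by
      rw [hsplit, norm_add_sq_real, real_inner_smul_right, norm_smul]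
      simp [abs_of_pos hβ]
      try ring
    have hrel : ⟪lam (k+1) - lamstar, A (x (k+1)) - b⟫
        = ⟪lam k - lamstar, A (x (k+1)) - b⟫ + β*‖A (x (k+1)) - b‖^2 := by
      rw [hsplit, inner_add_left, real_inner_smul_left, real_inner_self_eq_norm_sq]
      try ring
    have h3 := hD3 k hk
    rw [hrel] at h3
    rw [hexp]
    nlinarith [h3]

  -- summability of the tolerance sequence
  have hgt : 1 < 2*α := by linarith [hα.1]
  have hηposn : ∀ j : ℕ, 0 ≤ η (j+1) := by
    intro j
    rw [hη (j+1) (by omega)]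
    positivity
  have hsumm : Summable (fun j : ℕ => η (j+1)) := by
    have hs0 : Summable (fun j : ℕ => σ * (1/((j:ℝ))^(2*α))) :=
      (Real.summable_one_div_nat_rpow.mpr hgt).mul_left σ
    have hs1 : Summable (fun j : ℕ => σ * (1/(((j+1:ℕ)):ℝ)^(2*α))) := by
      have := (summable_nat_add_iff 1).mpr hs0
      exact this.congr (fun j => by push_cast; ring_nf)
    apply hs1.congr
    intro j
    rw [hη (j+1) (by omega)]
    push_cast
    ring
  have hη1 : η 1 = σ := by
    rw [hη 1 le_rfl]
    norm_num [Real.one_rpow]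
  have htsum0 : 0 ≤ ∑' (j : ℕ), η (j+1) := tsum_nonneg hηposn
  have htsumσ : σ ≤ ∑' (j : ℕ), η (j+1) := by
    have := Summable.le_tsum hsumm 0 (fun j _ => hηposn j)
    simpa [hη1] using this
  have hBsq : B^2 = ‖lam 1 - lamstar‖^2 + 2*β*∑' (j : ℕ), η (j+1) := by
    rw [hB, Real.sq_sqrt]
    have : 0 ≤ 2*β*∑' (j : ℕ), η (j+1) := by positivity
    positivity
  have hB2σ : 2*β*σ ≤ B^2 := by
    have h1 : 2*β*σ ≤ 2*β*∑' (j : ℕ), η (j+1) :=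
      mul_le_mul_of_nonneg_left htsumσ (by linarith)
    have h2 : (0:ℝ) ≤ ‖lam 1 - lamstar‖^2 := sq_nonneg _
    linarith [hBsq]
  have hB2pos : 0 < B^2 := lt_of_lt_of_le (by positivity) hB2σ
  have hB0 : 0 ≤ B := by rw [hB]; exact Real.sqrt_nonneg _
  have hBpos : 0 < B := by nlinarith
  have hθpos : 0 < θ := by rw [hθ]; exact div_pos hβ (by nlinarith)
  have hθσ8 : θ*σ ≤ 1/8 := by
    rw [hθ, div_mul_eq_mul_div, div_le_iff₀ (by nlinarith : (0:ℝ) < 4*B^2)]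
    nlinarith
  -- uniform bound on multipliers
  have hlamB : ∀ k : ℕ, 1 ≤ k → ‖lam k - lamstar‖^2 ≤ B^2 := by
    have hpart : ∀ k : ℕ, ‖lam (k+1) - lamstar‖^2
        ≤ ‖lam 1 - lamstar‖^2 + 2*β*(∑ j ∈ Finset.range k, η (j+1)) := by
      intro k
      induction k with
      | zero => simp
      | succ p ih =>
        have hDp := hD4 (p+1) (by omega)
        have hδp : 0 ≤ d lamstar - d (lam (p+1+1)) := by
          linarith [hstar (lam (p+1+1))]
        have hnn : 0 ≤ 2*β*(d lamstar - d (lam (p+1+1))) := by positivity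
        rw [Finset.sum_range_succ]
        linarith
    intro k hk
    obtain ⟨j, rfl⟩ : ∃ j, k = j+1 := ⟨k-1, by omega⟩
    have hsum_le : ∑ j ∈ Finset.range j, η (j+1) ≤ ∑' (j : ℕ), η (j+1) :=
      Summable.sum_le_tsum _ (fun i _ => hηposn i) hsumm
    have := mul_le_mul_of_nonneg_left hsum_le (by linarith : (0:ℝ) ≤ 2*β)
    linarith [hpart j, hBsq]
  have hδ0 : ∀ k : ℕ, 1 ≤ k → 0 ≤ δ k := by
    intro k hk; rw [hδ]; linarith [hstar (lam k)]
  -- constants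
  set T := C + Real.sqrt σ with hTdef
  have hsqrtσ : 0 ≤ Real.sqrt σ := Real.sqrt_nonneg _
  have hCsqrt : 0 ≤ 4 * Real.sqrt (3 * (3 / 2 * θ * σ + 1) * σ / θ) := by positivity
  have hC1 : 4/3*(4/θ) ≤ C := by
    rw [hC]
    have := le_max_right (δ 1) (4/θ)
    linarith
  have hCδ : 4/3*(δ 1) ≤ C := by
    rw [hC]
    have := le_max_left (δ 1) (4/θ)
    linarith
  have hθC : 16/3 ≤ θ*C := by
    have h1 := mul_le_mul_of_nonneg_left hC1 hθpos.le
    have h2 : θ*(4/3*(4/θ)) = 16/3 := by field_simp; ring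
    linarith
  have hθT : 16/3 ≤ θ*T := by
    have hexp : θ*T = θ*C + θ*Real.sqrt σ := by rw [hTdef]; ring
    have : 0 ≤ θ*Real.sqrt σ := by positivity
    linarith
  have hT0 : 0 < T := by
    rcases le_or_gt T 0 with h | h
    · nlinarith [mul_nonpos_of_nonneg_of_nonpos hθpos.le h]
    · exact h
  have hδ1T : δ 1 ≤ 3/4*T := by
    have := hδ0 1 le_rfl
    rw [hTdef]
    linarith
  -- recursion hypotheses
  have hrecr : ∀ k : ℕ, 1 ≤ k →
      δ (k+1) ≤ δ k + η k - β/2*‖A (x (k+1)) - b‖^2 := by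
    intro k hk
    rw [hδ, hδ]
    linarith [hD1 k hk]
  have hrec1 : ∀ k : ℕ, 1 ≤ k → δ (k+1) ≤ δ k + η k := by
    intro k hk
    have h0 : 0 ≤ β/2*‖A (x (k+1)) - b‖^2 := by positivity
    linarith [hrecr k hk]
  have hrec2 : ∀ k : ℕ, 1 ≤ k → η k ≤ δ k →
      δ (k+1) ≤ δ k + η k - 2*θ*(δ k - η k)^2 := by
    intro k hk hηδ
    have hdB : δ k - η k ≤ B*‖A (x (k+1)) - b‖ := by
      have h1 : δ k - η k ≤ ⟪lamstar - lam k, A (x (k+1)) - b⟫ := by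
        rw [hδ]; linarith [hD2 k hk]
      have h2 : (⟪lamstar - lam k, A (x (k+1)) - b⟫ : ℝ)
          ≤ ‖lamstar - lam k‖*‖A (x (k+1)) - b‖ := real_inner_le_norm _ _
      have h3 : ‖lamstar - lam k‖ = ‖lam k - lamstar‖ := norm_sub_rev _ _
      have h4 : ‖lam k - lamstar‖ ≤ B := by
        nlinarith [hlamB k hk, norm_nonneg (lam k - lamstar)]
      have h5 := mul_le_mul_of_nonneg_right h4 (norm_nonneg (A (x (k+1)) - b))
      rw [h3] at h2
      linarith
    have hsqb : (δ k - η k)^2 ≤ B^2*‖A (x (k+1)) - b‖^2 := by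
      nlinarith [pow_le_pow_left₀ (by linarith : 0 ≤ δ k - η k) hdB 2]
    have hfrm : 2*θ*(δ k - η k)^2 ≤ β/2*‖A (x (k+1)) - b‖^2 := by
      have hkey : 2*θ*(δ k - η k)^2 = (β/(2*B^2))*(δ k - η k)^2 := by rw [hθ]; ring
      have h2b : (β/(2*B^2))*(δ k - η k)^2 ≤ (β/(2*B^2))*(B^2*‖A (x (k+1)) - b‖^2) :=
        mul_le_mul_of_nonneg_left hsqb (by positivity)
      have h3b : (β/(2*B^2))*(B^2*‖A (x (k+1)) - b‖^2) = β/2*‖A (x (k+1)) - b‖^2 := by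
        field_simp
      linarith [hkey.le]
    linarith [hrecr k hk]
  -- apply the recursion rate lemma
  have hrate := rate_rec hθpos hσ hθσ8 hθT hα.1 hα.2 hη hδ0 hδ1T hrec1 hrec2
  -- final assembly
  intro k hk
  have hkpos : (0:ℝ) < (k:ℝ)^α := by
    apply Real.rpow_pos_of_pos
    exact_mod_cast Nat.pos_of_ne_zero (by omega)
  have hψhalf : β/2*ψ k = T/(k:ℝ)^α := by
    rw [hψ k]
    field_simp
  have hr2 : ‖A (x (k+1)) - b‖^2 ≤ ψ k := by
    have h1 := hrecr k hk
    have h2 := hδ0 (k+1) (by omega)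
    have h3 := hrate k hk
    nlinarith [hβ]
  have hψ0 : 0 ≤ ψ k := le_trans (sq_nonneg _) hr2
  have hrsqrt : ‖A (x (k+1)) - b‖ ≤ Real.sqrt (ψ k) := by
    have := Real.sqrt_le_sqrt hr2
    rwa [Real.sqrt_sq (norm_nonneg _)] at this
  have hlamnorm : ‖lam (k+1)‖ ≤ ‖lamstar‖ + B := by
    have h1 : ‖lam (k+1) - lamstar‖ ≤ B := by
      nlinarith [hlamB (k+1) (by omega), norm_nonneg (lam (k+1) - lamstar)]
    calc ‖lam (k+1)‖ = ‖lamstar + (lam (k+1) - lamstar)‖ := by congr 1; abel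
      _ ≤ ‖lamstar‖ + ‖lam (k+1) - lamstar‖ := norm_add_le _ _
      _ ≤ ‖lamstar‖ + B := by linarith
  constructor
  · -- lower bound
    have hlow := hdle lamstar (x (k+1))
    rw [hLform] at hlow
    have hinner2 : (⟪lamstar, A (x (k+1)) - b⟫ : ℝ)
        ≤ ‖lamstar‖*‖A (x (k+1)) - b‖ := real_inner_le_norm _ _
    have h6 := mul_le_mul_of_nonneg_left hrsqrt (norm_nonneg lamstar)
    have h7 := mul_le_mul_of_nonneg_left hr2 (by linarith : (0:ℝ) ≤ β/2)
    have hds : d lamstar = f xstar + g xstar := by rw [hsd, hF]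
    rw [hF, hF]
    linarith
  · -- upper bound
    have hup := hΦmin k hk xstar
    rw [hfeas, sub_self, inner_zero_right] at hup
    have habs := abs_real_inner_le_norm (lam (k+1)) (A (x (k+1)) - b)
    have hneg := neg_abs_le (⟪lam (k+1), A (x (k+1)) - b⟫ : ℝ)
    have hmul : ‖lam (k+1)‖*‖A (x (k+1)) - b‖ ≤ (‖lamstar‖ + B)*Real.sqrt (ψ k) :=
      mul_le_mul hlamnorm hrsqrt (norm_nonneg _) (by positivity)
    have hds : d lamstar = f xstar + g xstar := by rw [hsd, hF]
    rw [hF, hF]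
    linarith
end

section
/- (Lemma 1, inequality (10)) Let λ ∈ ℝᵐ, η ≥ 0, and let x⁺ ∈ ℝⁿ be an η-approximate solution of the AL subproblem at λ. Then d(λ + β(Ax⁺ − b)) ≥ L_β(x⁺; λ) + (β/2)‖Ax⁺ − b‖² − η. -/
open RealInnerProductSpace

/-- Gradient inequality for a convex differentiable function. -/
lemma convex_grad_ineq {E : Type*} [NormedAddCommGroup E] [InnerProductSpace ℝ E] [CompleteSpace E]
    {f : E → ℝ} {gx : E} {x : E} (hf : ConvexOn ℝ Set.univ f)
    (hd : HasGradientAt f gx x) (y : E) :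
    f x + ⟪gx, y - x⟫ ≤ f y := by
  have hφconv : ConvexOn ℝ Set.univ (f ∘ (AffineMap.lineMap x y : ℝ →ᵃ[ℝ] E)) := by
    simpa using hf.comp_affineMap (AffineMap.lineMap x y : ℝ →ᵃ[ℝ] E)
  have hline : HasDerivAt (fun t : ℝ => (AffineMap.lineMap x y : ℝ →ᵃ[ℝ] E) t) (y - x) 0 := by
    simp only [AffineMap.coe_lineMap]
    simpa using ((hasDerivAt_id (0:ℝ)).smul_const (y - x)).add_const x
  have hF : HasFDerivAt f (InnerProductSpace.toDual ℝ E gx) x := hd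
  have hderiv : HasDerivAt (f ∘ (AffineMap.lineMap x y : ℝ →ᵃ[ℝ] E)) ⟪gx, y - x⟫ 0 := by
    have h0 : (AffineMap.lineMap x y : ℝ →ᵃ[ℝ] E) (0:ℝ) = x := by simp
    have hF' : HasFDerivAt f (InnerProductSpace.toDual ℝ E gx)
        ((AffineMap.lineMap x y : ℝ →ᵃ[ℝ] E) (0:ℝ)) := by rw [h0]; exact hF
    have := hF'.comp_hasDerivAt (x := (0:ℝ)) hline
    simpa [InnerProductSpace.toDual_apply_apply] using this
  have hs := hφconv.le_slope_of_hasDerivAt (Set.mem_univ (0:ℝ)) (Set.mem_univ (1:ℝ))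
    zero_lt_one hderiv
  rw [slope_def_field] at hs
  simp only [Function.comp_apply, AffineMap.lineMap_apply_one, AffineMap.lineMap_apply_zero,
    div_one, sub_zero] at hs
  linarith

/-- **Lemma 1, inequality (10).**
Let `x⁺` be an `η`-approximate solution of the AL subproblem at `λ`. Then
`d(λ + β(Ax⁺ − b)) ≥ L_β(x⁺; λ) + (β/2)‖Ax⁺ − b‖² − η`. -/
theorem ial_dual_lower_bound
    {n m : ℕ}
    (A : EuclideanSpace ℝ (Fin n) →L[ℝ] EuclideanSpace ℝ (Fin m))
    (b : EuclideanSpace ℝ (Fin m))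
    (f g : EuclideanSpace ℝ (Fin n) → ℝ)
    (f' : EuclideanSpace ℝ (Fin n) → EuclideanSpace ℝ (Fin n))
    (hf : ConvexOn ℝ Set.univ f)
    (hf' : ∀ x, HasGradientAt f (f' x) x)
    (hg : ConvexOn ℝ Set.univ g)
    (β : ℝ) (hβ : 0 < β)
    (L : EuclideanSpace ℝ (Fin n) → EuclideanSpace ℝ (Fin m) → ℝ)
    (hL : ∀ x lam, L x lam
        = f x + ⟪lam, A x - b⟫ + β / 2 * ‖A x - b‖ ^ 2 + g x)
    (d : EuclideanSpace ℝ (Fin m) → ℝ)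
    (hd : ∀ lam, IsLeast (Set.range fun x => L x lam) (d lam))
    (lam : EuclideanSpace ℝ (Fin m))
    (η : ℝ) (hη : 0 ≤ η)
    (xp : EuclideanSpace ℝ (Fin n))
    (happrox : ∀ y,
        ⟪f' xp + A.adjoint (lam + β • (A xp - b)), xp - y⟫ + g xp - g y ≤ η) :
    L xp lam + β / 2 * ‖A xp - b‖ ^ 2 - η ≤ d (lam + β • (A xp - b)) := by
  set u := A xp - b with hu
  set lp := lam + β • u with hlp
  obtain ⟨x₀, hx₀⟩ := (hd lp).1
  rw [← hx₀]
  -- gradient inequality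
  have hgrad : f xp + ⟪f' xp, x₀ - xp⟫ ≤ f x₀ := convex_grad_ineq hf (hf' xp) x₀
  have happ := happrox x₀
  -- inner product identities
  have hadj : ⟪A.adjoint lp, xp - x₀⟫ = ⟪lp, A xp - A x₀⟫ := by
    rw [ContinuousLinearMap.adjoint_inner_left, map_sub]
  have hsplit : ⟪f' xp + A.adjoint lp, xp - x₀⟫
      = ⟪f' xp, xp - x₀⟫ + ⟪lp, A xp - A x₀⟫ := by
    rw [inner_add_left, hadj]
  have hinner1 : ⟪f' xp, xp - x₀⟫ = - ⟪f' xp, x₀ - xp⟫ := by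
    rw [← inner_neg_right]; congr 1; abel
  have hinner2 : ⟪lp, A x₀ - b⟫ + ⟪lp, A xp - A x₀⟫ = ⟪lp, u⟫ := by
    rw [← inner_add_right, hu]; congr 1; abel
  have hlpu : ⟪lp, u⟫ = ⟪lam, u⟫ + β * ‖u‖ ^ 2 := by
    rw [hlp, inner_add_left, real_inner_smul_left, real_inner_self_eq_norm_sq]
  have hnonneg : 0 ≤ β / 2 * ‖A x₀ - b‖ ^ 2 := by positivity
  show L xp lam + β / 2 * ‖u‖ ^ 2 - η ≤ L x₀ lp
  rw [hL x₀ lp, hL xp lam]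
  rw [hsplit, hinner1] at happ
  nlinarith [hgrad, happ, hinner2, hlpu, hnonneg]
end

section
/- (Lemma 2, approximate gradient error bound) Let λ ∈ ℝᵐ, η ≥ 0, let x⁺ ∈ ℝⁿ be an η-approximate solution of the AL subproblem at λ, and let x̄ ∈ ℝⁿ be a 0-approximate solution of the AL subproblem at λ (i.e., an exact solution: for every x, ⟨∇f(x̄) + Aᵀ(λ + β(Ax̄ − b)), x̄ − x⟩ + g(x̄) − g(x) ≤ 0). Then ‖(Ax̄ − b) − (Ax⁺ − b)‖² ≤ η/β. -/
/-!
Testing the approximate optimality of `x⁺` against `x̄` and the exact optimality of `x̄` against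
`x⁺`, and adding, the `g`-terms cancel and what remains is
`⟪G x⁺ - G x̄, x⁺ - x̄⟫ ≤ η`, where `G x = ∇f x + Aᵀ(λ + β(Ax - b))`. The left side splits as
`⟪∇f x⁺ - ∇f x̄, x⁺ - x̄⟫ + β‖A x⁺ - A x̄‖²`, and the first summand is nonnegative because the
gradient of a convex function is monotone.
-/

open RealInnerProductSpace

theorem ConvexOn.le_sub_of_hasFDerivAt {E : Type*} [NormedAddCommGroup E] [NormedSpace ℝ E]
    {s : Set E} {f : E → ℝ} {f' : E →L[ℝ] ℝ} {x y : E} (hf : ConvexOn ℝ s f)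
    (hx : x ∈ s) (hy : y ∈ s) (hf' : HasFDerivAt f f' x) : f' (y - x) ≤ f y - f x := by
  set ℓ : ℝ →ᵃ[ℝ] E := AffineMap.lineMap x y
  have hline : ConvexOn ℝ (ℓ ⁻¹' s) (f ∘ ℓ) := hf.comp_affineMap ℓ
  have hderiv : HasDerivAt (f ∘ ℓ) (f' (y - x)) 0 :=
    (by simpa [ℓ] using hf' : HasFDerivAt f f' (ℓ 0)).comp_hasDerivAt 0
      AffineMap.hasDerivAt_lineMap
  simpa [ℓ, slope_def_field] using
    hline.le_slope_of_hasDerivAt (by simpa [ℓ] using hx) (by simpa [ℓ] using hy) zero_lt_one hderiv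

section ConvexGradient

variable {E : Type*} [NormedAddCommGroup E] [InnerProductSpace ℝ E] [CompleteSpace E]
  {s : Set E} {f : E → ℝ} {x y gx gy : E}

theorem ConvexOn.inner_gradient_le_sub (hf : ConvexOn ℝ s f) (hx : x ∈ s) (hy : y ∈ s)
    (hgx : HasGradientAt f gx x) : ⟪gx, y - x⟫ ≤ f y - f x := by
  simpa using hf.le_sub_of_hasFDerivAt hx hy hgx.hasFDerivAt

theorem ConvexOn.inner_gradient_sub_nonneg (hf : ConvexOn ℝ s f) (hx : x ∈ s) (hy : y ∈ s)
    (hgx : HasGradientAt f gx x) (hgy : HasGradientAt f gy y) : 0 ≤ ⟪gx - gy, x - y⟫ := by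
  have hxy := hf.inner_gradient_le_sub hx hy hgx
  have hyx := hf.inner_gradient_le_sub hy hx hgy
  rw [← neg_sub x y, inner_neg_right] at hxy
  rw [inner_sub_left]
  linarith

end ConvexGradient

section VariationalInequality

variable {E : Type*} [NormedAddCommGroup E] [InnerProductSpace ℝ E]

/-- `x` solves, up to `η`, the variational inequality `0 ∈ T x + ∂g x`. -/
def IsApproxVariationalSolution (T : E → E) (g : E → ℝ) (η : ℝ) (x : E) : Prop :=
  ∀ y, ⟪T x, x - y⟫ + g x - g y ≤ η

theorem IsApproxVariationalSolution.inner_sub_sub_le {T : E → E} {g : E → ℝ} {η₁ η₂ : ℝ}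
    {x₁ x₂ : E} (h₁ : IsApproxVariationalSolution T g η₁ x₁)
    (h₂ : IsApproxVariationalSolution T g η₂ x₂) : ⟪T x₁ - T x₂, x₁ - x₂⟫ ≤ η₁ + η₂ := by
  have h₁₂ := h₁ x₂
  have h₂₁ := h₂ x₁
  rw [← neg_sub x₁ x₂, inner_neg_right] at h₂₁
  rw [inner_sub_left]
  linarith

end VariationalInequality

section AugmentedLagrangian

variable {E F : Type*} [NormedAddCommGroup E] [InnerProductSpace ℝ E] [CompleteSpace E]
  [NormedAddCommGroup F] [InnerProductSpace ℝ F] [CompleteSpace F]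

/-- The gradient of the smooth part `f(x) + ⟪λ, Ax - b⟫ + (β/2)‖Ax - b‖²` of the augmented
Lagrangian, given the gradient `f'` of `f`. -/
noncomputable def augLagrangianGrad (f' : E → E) (A : E →L[ℝ] F) (b lam : F) (β : ℝ) (x : E) : E :=
  f' x + A.adjoint (lam + β • (A x - b))

theorem inner_augLagrangianGrad_sub (f' : E → E) (A : E →L[ℝ] F) (b lam : F) (β : ℝ) (x y : E) :
    ⟪augLagrangianGrad f' A b lam β x - augLagrangianGrad f' A b lam β y, x - y⟫ =
      ⟪f' x - f' y, x - y⟫ + β * ‖A x - A y‖ ^ 2 := by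
  have hres : (lam + β • (A x - b)) - (lam + β • (A y - b)) = β • (A x - A y) := by
    rw [smul_sub, smul_sub, smul_sub]; abel
  rw [augLagrangianGrad, augLagrangianGrad, add_sub_add_comm, ← map_sub, hres, inner_add_left,
    ContinuousLinearMap.adjoint_inner_left, map_sub, real_inner_smul_left,
    real_inner_self_eq_norm_sq]

end AugmentedLagrangian

theorem ial_gradient_error_bound_general
    {n m : ℕ}
    (A : EuclideanSpace ℝ (Fin n) →L[ℝ] EuclideanSpace ℝ (Fin m))
    (b : EuclideanSpace ℝ (Fin m))
    (f g : EuclideanSpace ℝ (Fin n) → ℝ)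
    (f' : EuclideanSpace ℝ (Fin n) → EuclideanSpace ℝ (Fin n))
    (hf : ConvexOn ℝ Set.univ f)
    (hf' : ∀ x, HasGradientAt f (f' x) x)
    (β : ℝ) (hβ : 0 < β)
    (lam : EuclideanSpace ℝ (Fin m))
    (η : ℝ)
    (xp : EuclideanSpace ℝ (Fin n))
    (happrox : ∀ y,
        ⟪f' xp + A.adjoint (lam + β • (A xp - b)), xp - y⟫ + g xp - g y ≤ η)
    (xbar : EuclideanSpace ℝ (Fin n))
    (hexact : ∀ y,
        ⟪f' xbar + A.adjoint (lam + β • (A xbar - b)), xbar - y⟫ + g xbar - g y ≤ 0) :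
    ‖(A xbar - b) - (A xp - b)‖ ^ 2 ≤ η / β := by
  have hsum := IsApproxVariationalSolution.inner_sub_sub_le
    (T := augLagrangianGrad f' A b lam β) happrox hexact
  rw [inner_augLagrangianGrad_sub, add_zero] at hsum
  have hmono := hf.inner_gradient_sub_nonneg (Set.mem_univ xp) (Set.mem_univ xbar) (hf' xp)
    (hf' xbar)
  rw [sub_sub_sub_cancel_right, norm_sub_rev, le_div_iff₀ hβ]
  linarith

/-- **Lemma 2 (approximate gradient error bound).**
Let `x⁺` be an `η`-approximate solution and `x̄` an exact solution of the AL
subproblem at `λ`. Then `‖(Ax̄ − b) − (Ax⁺ − b)‖² ≤ η/β`. -/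
theorem ial_gradient_error_bound
    {n m : ℕ}
    (A : EuclideanSpace ℝ (Fin n) →L[ℝ] EuclideanSpace ℝ (Fin m))
    (b : EuclideanSpace ℝ (Fin m))
    (f g : EuclideanSpace ℝ (Fin n) → ℝ)
    (f' : EuclideanSpace ℝ (Fin n) → EuclideanSpace ℝ (Fin n))
    (hf : ConvexOn ℝ Set.univ f)
    (hf' : ∀ x, HasGradientAt f (f' x) x)
    (hg : ConvexOn ℝ Set.univ g)
    (β : ℝ) (hβ : 0 < β)
    (lam : EuclideanSpace ℝ (Fin m))
    (η : ℝ) (hη : 0 ≤ η)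
    (xp : EuclideanSpace ℝ (Fin n))
    (happrox : ∀ y,
        ⟪f' xp + A.adjoint (lam + β • (A xp - b)), xp - y⟫ + g xp - g y ≤ η)
    (xbar : EuclideanSpace ℝ (Fin n))
    (hexact : ∀ y,
        ⟪f' xbar + A.adjoint (lam + β • (A xbar - b)), xbar - y⟫ + g xbar - g y ≤ 0) :
    ‖(A xbar - b) - (A xp - b)‖ ^ 2 ≤ η / β :=
  ial_gradient_error_bound_general A b f g f' hf hf' β hβ lam η xp happrox xbar hexact
end

section
/- (One-step key descent inequality, proof of Theorem 1) Let λ ∈ ℝᵐ, η ≥ 0, let x⁺ ∈ ℝⁿ be an η-approximate solution of the AL subproblem at λ, let x̄ ∈ ℝⁿ be a 0-approximate (exact) solution of the AL subproblem at λ, and set λ⁺ := λ + β(Ax⁺ − b). Then d(λ⁺) ≥ d(λ) + (β/4)‖Ax̄ − b‖² − (3/2)η. -/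
open RealInnerProductSpace

/-- The gradient inequality for a convex differentiable function:
`f x + ⟪∇f x, y - x⟫ ≤ f y`. -/
lemma convex_gradient_ineq {N : ℕ} {f : EuclideanSpace ℝ (Fin N) → ℝ}
    (hf : ConvexOn ℝ Set.univ f) {x v : EuclideanSpace ℝ (Fin N)}
    (hx : HasGradientAt f v x) (y : EuclideanSpace ℝ (Fin N)) :
    f x + ⟪v, y - x⟫ ≤ f y := by
  set c : ℝ →ᵃ[ℝ] EuclideanSpace ℝ (Fin N) := AffineMap.lineMap x y with hc
  have hφconv : ConvexOn ℝ Set.univ (f ∘ c) := by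
    have := hf.comp_affineMap c
    simpa using this
  have hcd : HasDerivAt (fun t : ℝ => c t) (y - x) 0 := by
    have h1 : ∀ t : ℝ, c t = x + t • (y - x) := fun t => by
      simp [hc, AffineMap.lineMap_apply, add_comm]
    have h2 : HasDerivAt (fun t : ℝ => x + t • (y - x)) (y - x) 0 := by
      simpa using ((hasDerivAt_id (0:ℝ)).smul_const (y - x)).const_add x
    simpa [funext h1] using h2
  have hφd : HasDerivAt (f ∘ c) ⟪v, y - x⟫ 0 := by
    have hfd : HasFDerivAt f ((InnerProductSpace.toDual ℝ _) v) x := hx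
    have hfd' : HasFDerivAt f ((InnerProductSpace.toDual ℝ _) v) (c 0) := by
      simpa [hc, AffineMap.lineMap_apply] using hfd
    have := hfd'.comp_hasDerivAt (x := (0:ℝ)) hcd
    simpa [InnerProductSpace.toDual_apply_apply] using this
  have hslope := hφconv.le_slope_of_hasDerivAt (Set.mem_univ (0:ℝ))
    (Set.mem_univ (1:ℝ)) one_pos hφd
  have hs : slope (f ∘ c) 0 1 = f y - f x := by
    simp [slope_def_field, hc, AffineMap.lineMap_apply]
  rw [hs] at hslope
  linarith

/-- Key inequality for an `ε`-approximate solution `z` of the AL subproblem: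
for all `y`, `L z lam + (β/2)‖A y - A z‖² - ε ≤ L y lam`. -/
lemma subproblem_key {n m : ℕ}
    (A : EuclideanSpace ℝ (Fin n) →L[ℝ] EuclideanSpace ℝ (Fin m))
    (b : EuclideanSpace ℝ (Fin m))
    (f g : EuclideanSpace ℝ (Fin n) → ℝ)
    (f' : EuclideanSpace ℝ (Fin n) → EuclideanSpace ℝ (Fin n))
    (hf : ConvexOn ℝ Set.univ f)
    (hf' : ∀ x, HasGradientAt f (f' x) x)
    (β : ℝ)
    (L : EuclideanSpace ℝ (Fin n) → EuclideanSpace ℝ (Fin m) → ℝ)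
    (hL : ∀ x lam, L x lam
        = f x + ⟪lam, A x - b⟫ + β / 2 * ‖A x - b‖ ^ 2 + g x)
    (lam : EuclideanSpace ℝ (Fin m)) (ε : ℝ)
    (z : EuclideanSpace ℝ (Fin n))
    (hz : ∀ y,
        ⟪f' z + A.adjoint (lam + β • (A z - b)), z - y⟫ + g z - g y ≤ ε)
    (y : EuclideanSpace ℝ (Fin n)) :
    L z lam + β / 2 * ‖A y - A z‖ ^ 2 - ε ≤ L y lam := by
  have hconv := convex_gradient_ineq hf (hf' z) y
  have h2 := hz y
  have hsplit : ⟪f' z + A.adjoint (lam + β • (A z - b)), z - y⟫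
      = ⟪f' z, z - y⟫ + ⟪lam + β • (A z - b), A z - A y⟫ := by
    rw [inner_add_left, ContinuousLinearMap.adjoint_inner_left, map_sub]
  have hneg : ⟪f' z, z - y⟫ = -⟪f' z, y - z⟫ := by
    rw [← inner_neg_right, neg_sub]
  have hinner1 : ⟪lam + β • (A z - b), A z - A y⟫
      = ⟪lam, A z - b⟫ - ⟪lam, A y - b⟫ + β * ⟪A z - b, A z - A y⟫ := by
    rw [inner_add_left, real_inner_smul_left]
    have : (A z - A y : EuclideanSpace ℝ (Fin m)) = (A z - b) - (A y - b) := by abel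
    rw [this, inner_sub_right]
    try ring
  have hnorm : ‖A y - b‖ ^ 2
      = ‖A z - b‖ ^ 2 + 2 * ⟪A z - b, A y - A z⟫ + ‖A y - A z‖ ^ 2 := by
    have h : (A y - b : EuclideanSpace ℝ (Fin m)) = (A z - b) + (A y - A z) := by abel
    rw [h, norm_add_sq_real]
  have hswap : ⟪A z - b, A z - A y⟫ = -⟪A z - b, A y - A z⟫ := by
    rw [← inner_neg_right]; congr 1; abel
  rw [hL z lam, hL y lam, hnorm]
  rw [hsplit, hneg, hinner1, hswap] at h2
  nlinarith [h2, hconv]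

/-- **One-step key descent inequality (proof of Theorem 1).**
Let `x⁺` be an `η`-approximate solution and `x̄` an exact solution of the AL
subproblem at `λ`, and set `λ⁺ := λ + β(Ax⁺ − b)`. Then
`d(λ⁺) ≥ d(λ) + (β/4)‖Ax̄ − b‖² − (3/2)η`. -/
theorem ial_one_step_key_descent
    {n m : ℕ}
    (A : EuclideanSpace ℝ (Fin n) →L[ℝ] EuclideanSpace ℝ (Fin m))
    (b : EuclideanSpace ℝ (Fin m))
    (f g : EuclideanSpace ℝ (Fin n) → ℝ)
    (f' : EuclideanSpace ℝ (Fin n) → EuclideanSpace ℝ (Fin n))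
    (hf : ConvexOn ℝ Set.univ f)
    (hf' : ∀ x, HasGradientAt f (f' x) x)
    (hg : ConvexOn ℝ Set.univ g)
    (β : ℝ) (hβ : 0 < β)
    (L : EuclideanSpace ℝ (Fin n) → EuclideanSpace ℝ (Fin m) → ℝ)
    (hL : ∀ x lam, L x lam
        = f x + ⟪lam, A x - b⟫ + β / 2 * ‖A x - b‖ ^ 2 + g x)
    (d : EuclideanSpace ℝ (Fin m) → ℝ)
    (hd : ∀ lam, IsLeast (Set.range fun x => L x lam) (d lam))
    (lam : EuclideanSpace ℝ (Fin m))
    (η : ℝ) (hη : 0 ≤ η)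
    (xp : EuclideanSpace ℝ (Fin n))
    (happrox : ∀ y,
        ⟪f' xp + A.adjoint (lam + β • (A xp - b)), xp - y⟫ + g xp - g y ≤ η)
    (xbar : EuclideanSpace ℝ (Fin n))
    (hexact : ∀ y,
        ⟪f' xbar + A.adjoint (lam + β • (A xbar - b)), xbar - y⟫ + g xbar - g y ≤ 0) :
    d lam + β / 4 * ‖A xbar - b‖ ^ 2 - 3 / 2 * η ≤ d (lam + β • (A xp - b)) := by
  set lamp := lam + β • (A xp - b) with hlamp
  -- minimizer achieving d lamp
  obtain ⟨xs, hxs⟩ := (hd lamp).1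
  -- d lam is a lower bound
  have hdlb : d lam ≤ L xbar lam := (hd lam).2 ⟨xbar, rfl⟩
  -- key inequalities
  have hkp := subproblem_key A b f g f' hf hf' β L hL lam η xp happrox
  have hkb := subproblem_key A b f g f' hf hf' β L hL lam 0 xbar hexact
  have h1 : L xbar lam + β / 2 * ‖A xp - A xbar‖ ^ 2 - 0 ≤ L xp lam := hkb xp
  have h2 : L xp lam + β / 2 * ‖A xs - A xp‖ ^ 2 - η ≤ L xs lam := hkp xs
  -- relation between L xs lamp and L xs lam
  have h3 : L xs lamp = L xs lam + β * ⟪A xp - b, A xs - b⟫ := by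
    rw [hL xs lamp, hL xs lam, hlamp, inner_add_left, real_inner_smul_left]
    ring
  -- norm identities
  have h4 : ‖A xs - A xp‖ ^ 2
      = ‖A xs - b‖ ^ 2 - 2 * ⟪A xp - b, A xs - b⟫ + ‖A xp - b‖ ^ 2 := by
    have h : (A xs - A xp : EuclideanSpace ℝ (Fin m)) = (A xs - b) - (A xp - b) := by abel
    rw [h, norm_sub_sq_real, real_inner_comm]
    try ring
  have h5 : ‖A xbar - b‖ ^ 2 ≤ 2 * ‖A xp - b‖ ^ 2 + 2 * ‖A xp - A xbar‖ ^ 2 := by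
    have h : (A xbar - b : EuclideanSpace ℝ (Fin m)) = (A xp - b) - (A xp - A xbar) := by abel
    rw [h, norm_sub_sq_real]
    have h6 : -⟪(A xp - b : EuclideanSpace ℝ (Fin m)), A xp - A xbar⟫
        ≤ ‖(A xp - b : EuclideanSpace ℝ (Fin m))‖ * ‖A xp - A xbar‖ := by
      rw [← inner_neg_right]
      calc ⟪(A xp - b : EuclideanSpace ℝ (Fin m)), -(A xp - A xbar)⟫
          ≤ ‖(A xp - b : EuclideanSpace ℝ (Fin m))‖ * ‖-(A xp - A xbar)‖ :=
            real_inner_le_norm _ _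
        _ = ‖(A xp - b : EuclideanSpace ℝ (Fin m))‖ * ‖A xp - A xbar‖ := by
            rw [norm_neg]
    nlinarith [sq_nonneg (‖(A xp - b : EuclideanSpace ℝ (Fin m))‖ - ‖A xp - A xbar‖)]
  have hxs' : L xs lamp = d lamp := hxs
  rw [h4] at h2
  have h6 := mul_le_mul_of_nonneg_left h5 (by positivity : (0:ℝ) ≤ β / 4)
  have h7 := mul_nonneg hβ.le (sq_nonneg ‖(A xs - b : EuclideanSpace ℝ (Fin m))‖)
  nlinarith [h1, h2, h3, hdlb, hxs', h6, h7, hη]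
end
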